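/- Let O be the ALCHOIF ontology consisting of the axioms A ⊑ ∃r.B, B ⊑ ∃r.A, ∃p⁻.⊤ ⊑ ∃p.⊤, A ⊑ ∃p.⊤ ⊓ ¬∃p⁻.⊤, {d} ⊑ A, and func(p⁻). Then: (1) (O, {A,B,r}) is a positive instance of MIXED-SAT, i.e., O has a model in which the extensions of A, B and r are all finite; and (2) for every Σ with p ∈ Σ, (O, Σ) is a negative instance of MIXED-SAT; in particular, p^I is infinite in every model I of O. -/
import Mathlib


namespace DLPaper

/-- Constants. -/
abbrev Const := ℕ

/-- Atoms over concept names (unary) and role names (binary). -/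
inductive Atom where
  | conceptAtom (A : ℕ) (c : Const)
  | roleAtom (r : ℕ) (c d : Const)
deriving DecidableEq

/-- A (database) instance is a set of atoms. -/
abbrev Instance := Set Atom

/-- Active domain of an instance. -/
def adom (I : Instance) : Set Const :=
  {c | (∃ A, Atom.conceptAtom A c ∈ I) ∨ (∃ r d, Atom.roleAtom r c d ∈ I) ∨
       (∃ r d, Atom.roleAtom r d c ∈ I)}

/-- Roles: role names and their inverses. -/
inductive Role where
  | name (r : ℕ)
  | inv (r : ℕ)
deriving DecidableEq

def Role.interp (I : Instance) : Role → Set (Const × Const)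
  | .name r => {p | Atom.roleAtom r p.1 p.2 ∈ I}
  | .inv r => {p | Atom.roleAtom r p.2 p.1 ∈ I}

/-- The inverse of a role. -/
def Role.invr : Role → Role
  | .name r => .inv r
  | .inv r => .name r

/-- ALCHOIF concepts. -/
inductive Concept where
  | atomic (A : ℕ)
  | top
  | bot
  | nominal (c : Const)
  | neg (C : Concept)
  | inter (C D : Concept)
  | union (C D : Concept)
  | ex (p : Role) (C : Concept)
  | all (p : Role) (C : Concept)
deriving DecidableEq

def Concept.interp (I : Instance) : Concept → Set Const
  | .atomic A => {c | Atom.conceptAtom A c ∈ I}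
  | .top => adom I
  | .bot => ∅
  | .nominal c => {c}
  | .neg C => adom I \ C.interp I
  | .inter C D => C.interp I ∩ D.interp I
  | .union C D => C.interp I ∪ D.interp I
  | .ex p C => {c | ∃ d, (c, d) ∈ p.interp I ∧ d ∈ C.interp I}
  | .all p C => {c | c ∈ adom I ∧ ∀ d, (c, d) ∈ p.interp I → d ∈ C.interp I}

/-- ALCHOIF axioms: concept inclusions, role inclusions, functionality assertions. -/
inductive Axiom where
  | conceptIncl (C D : Concept)
  | roleIncl (p q : Role)
  | funcAssert (p : Role)
deriving DecidableEq

/-- An ontology is a finite set of axioms. -/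
abbrev Ontology := Finset Axiom

def satisfiesAxiom (I : Instance) : Axiom → Prop
  | .conceptIncl C D => C.interp I ⊆ D.interp I
  | .roleIncl p q => p.interp I ⊆ q.interp I
  | .funcAssert p => ∀ c d₁ d₂, (c, d₁) ∈ p.interp I → (c, d₂) ∈ p.interp I → d₁ = d₂

def isModel (I : Instance) (O : Ontology) : Prop := ∀ a ∈ O, satisfiesAxiom I a

/-- ALCHOI ontologies: no functionality assertions. -/
def NoFunc (O : Ontology) : Prop := ∀ p, Axiom.funcAssert p ∉ O

/-! ### Conjunctive queries -/

inductive Term where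
  | var (v : ℕ)
  | const (c : Const)
deriving DecidableEq

inductive CQAtom where
  | conceptAtom (A : ℕ) (t : Term)
  | roleAtom (r : ℕ) (t u : Term)
deriving DecidableEq

/-- A conjunctive query: a list of answer variables and a conjunction of atoms;
all other variables are existentially quantified. -/
structure CQ where
  answerVars : List ℕ
  atoms : List CQAtom
deriving DecidableEq

def Term.eval (v : ℕ → Const) : Term → Const
  | .var x => v x
  | .const c => c

def CQAtom.holds (I : Instance) (v : ℕ → Const) : CQAtom → Prop
  | .conceptAtom A t => Atom.conceptAtom A (t.eval v) ∈ I
  | .roleAtom r t u => Atom.roleAtom r (t.eval v) (u.eval v) ∈ I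

/-- Answers of a CQ over an instance. -/
def cqAns (I : Instance) (q : CQ) : Set (List Const) :=
  {t | ∃ v : ℕ → Const, (∀ a ∈ q.atoms, a.holds I v) ∧ t = q.answerVars.map v}

/-- A Boolean query holds in `I`. -/
def cqHolds (I : Instance) (q : CQ) : Prop := [] ∈ cqAns I q

/-- Certain answers of a query w.r.t. an ontology and an instance. -/
def certainAns (O : Ontology) (I : Instance) (q : CQ) : Set (List Const) :=
  {t | ∀ J : Instance, I ⊆ J → isModel J O → t ∈ cqAns J q}

/-- `CWA O I Q`. -/
def cwa (O : Ontology) (I : Instance) (Q : Set CQ) : Set Instance :=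
  {J | I ⊆ J ∧ isModel J O ∧ ∀ q ∈ Q, cqAns I q = cqAns J q}

/-- `FIX O I Q`. -/
def fixSet (O : Ontology) (I : Instance) (Q : Set CQ) : Set Instance :=
  {J | I ⊆ J ∧ isModel J O ∧ ∀ q ∈ Q, cqAns J q = certainAns O ∅ q}

/-- An instance over a signature given as a set of concept names and a set of role names. -/
def instanceOver (Sc Sr : Set ℕ) (I : Instance) : Prop :=
  ∀ a ∈ I, match a with
    | Atom.conceptAtom A _ => A ∈ Sc
    | Atom.roleAtom r _ _ => r ∈ Sr

/-- `MOD O F I` for a focusing configuration `F = (Σ, Qcwa, Qfix, Qdet)`. -/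
def modSet (O : Ontology) (Qcwa Qfix : Set CQ) (I : Instance) : Set Instance :=
  cwa O I Qcwa ∩ fixSet O I Qfix

/-- Focusing solutions. -/
def IsFocusingSolution (O : Ontology) (Sc Sr : Set ℕ) (Qcwa Qfix Qdet : Set CQ) : Prop :=
  ∀ I : Instance, I.Finite → instanceOver Sc Sr I →
    ((cwa O I Qcwa).Nonempty → (modSet O Qcwa Qfix I).Nonempty) ∧
    (∀ J₁ ∈ modSet O Qcwa Qfix I, ∀ J₂ ∈ modSet O Qcwa Qfix I,
      ∀ q ∈ Qdet, cqAns J₁ q = cqAns J₂ q)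

end DLPaper

namespace DLPaper

/-- `(O, Σ)` is a positive instance of MIXED-SAT, where the signature `Σ` is given by
its concept-name part `Sc` and role-name part `Sr`. -/
def mixedSat (O : Ontology) (Sc Sr : Set ℕ) : Prop :=
  ∃ J : Instance, isModel J O ∧
    (∀ A ∈ Sc, ((Concept.atomic A).interp J).Finite) ∧
    (∀ r ∈ Sr, ((Role.name r).interp J).Finite)

/-- Concept name `A`. -/
def cA : Concept := Concept.atomic 0
/-- Concept name `B`. -/
def cB : Concept := Concept.atomic 1
/-- Role `r`. -/
def rr : Role := Role.name 0
/-- Role `p`. -/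
def rp : Role := Role.name 1

/-- The example ontology: `A ⊑ ∃r.B`, `B ⊑ ∃r.A`, `∃p⁻.⊤ ⊑ ∃p.⊤`,
`A ⊑ ∃p.⊤ ⊓ ¬∃p⁻.⊤`, `{d} ⊑ A`, `func(p⁻)`. -/
def exOntology : Ontology :=
  {Axiom.conceptIncl cA (Concept.ex rr cB),
   Axiom.conceptIncl cB (Concept.ex rr cA),
   Axiom.conceptIncl (Concept.ex rp.invr Concept.top) (Concept.ex rp Concept.top),
   Axiom.conceptIncl cA ((Concept.ex rp Concept.top).inter
     (Concept.neg (Concept.ex rp.invr Concept.top))),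
   Axiom.conceptIncl (Concept.nominal 0) cA,
   Axiom.funcAssert rp.invr}

/-- The example model: `A = {0}`, `B = {1}`, `r = {(0,1),(1,0)}`, `p = successor chain`. -/
def exJ : Instance :=
  {a | a = .conceptAtom 0 0 ∨ a = .conceptAtom 1 1 ∨ a = .roleAtom 0 0 1 ∨
       a = .roleAtom 0 1 0 ∨ ∃ n, a = .roleAtom 1 n (n+1)}

lemma memJ_concept (A c : ℕ) :
    Atom.conceptAtom A c ∈ exJ ↔ (A = 0 ∧ c = 0) ∨ (A = 1 ∧ c = 1) := by
  simp [exJ]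

lemma memJ_role (r c d : ℕ) :
    Atom.roleAtom r c d ∈ exJ ↔
      (r = 0 ∧ c = 0 ∧ d = 1) ∨ (r = 0 ∧ c = 1 ∧ d = 0) ∨ (r = 1 ∧ d = c + 1) := by
  simp only [exJ, Set.mem_setOf_eq]
  constructor
  · rintro (h|h|h|h|⟨n, h⟩) <;> simp_all
  · rintro (⟨rfl, rfl, rfl⟩|⟨rfl, rfl, rfl⟩|⟨rfl, rfl⟩)
    · tauto
    · tauto
    · exact Or.inr (Or.inr (Or.inr (Or.inr ⟨c, rfl⟩)))

lemma adomJ (c : ℕ) : c ∈ adom exJ := by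
  refine Or.inr (Or.inl ⟨1, c + 1, ?_⟩)
  rw [memJ_role]; tauto

lemma p_infinite_aux : ∀ I : Instance, isModel I exOntology → ¬ (rp.interp I).Finite := by
  intro I hI hfin
  have h5 : satisfiesAxiom I (Axiom.conceptIncl (Concept.nominal 0) cA) :=
    hI _ (by simp [exOntology])
  have h4 : satisfiesAxiom I (Axiom.conceptIncl cA ((Concept.ex rp Concept.top).inter
      (Concept.neg (Concept.ex rp.invr Concept.top)))) :=
    hI _ (by simp [exOntology])
  have h3 : satisfiesAxiom I (Axiom.conceptIncl (Concept.ex rp.invr Concept.top)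
      (Concept.ex rp Concept.top)) :=
    hI _ (by simp [exOntology])
  have hf : satisfiesAxiom I (Axiom.funcAssert rp.invr) :=
    hI _ (by simp [exOntology])
  simp only [satisfiesAxiom] at h5 h4 h3 hf
  have hA0 : (0 : Const) ∈ cA.interp I := h5 rfl
  obtain ⟨⟨d0, hd0, -⟩, -, h0notin⟩ := h4 hA0
  -- membership in adom from a p-edge
  have hadom1 : ∀ c d : Const, (c, d) ∈ rp.interp I → c ∈ adom I := by
    intro c d h; exact Or.inr (Or.inl ⟨1, d, h⟩)
  have hadom2 : ∀ c d : Const, (c, d) ∈ rp.interp I → d ∈ adom I := by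
    intro c d h; exact Or.inr (Or.inr ⟨1, c, h⟩)
  -- every p-successor has a p-successor
  have hstep : ∀ c d : Const, (c, d) ∈ rp.interp I → ∃ e, (d, e) ∈ rp.interp I := by
    intro c d h
    obtain ⟨e, he, -⟩ := h3 ⟨c, h, hadom1 c d h⟩
    exact ⟨e, he⟩
  -- choice function
  have key : ∀ c : Const, ∃ e, ((c, e) ∈ rp.interp I) ∨ ¬ ∃ e', (c, e') ∈ rp.interp I := by
    intro c
    by_cases h : ∃ e', (c, e') ∈ rp.interp I
    · exact ⟨h.choose, Or.inl h.choose_spec⟩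
    · exact ⟨0, Or.inr h⟩
  choose g hg using key
  set x : ℕ → Const := fun n => g^[n] 0 with hx
  have hx0 : x 0 = 0 := rfl
  have hxs : ∀ n, x (n + 1) = g (x n) := by
    intro n; simp [hx, Function.iterate_succ_apply']
  have edge : ∀ n, (x n, x (n + 1)) ∈ rp.interp I := by
    intro n
    induction n with
    | zero =>
      rcases hg 0 with h | h
      · rw [hxs 0, hx0]; exact h
      · exact absurd ⟨d0, hd0⟩ h
    | succ n ih =>
      rcases hg (x (n + 1)) with h | h
      · rw [hxs (n + 1)]; exact h
      · exact absurd (hstep _ _ ih) h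
  have hno0 : ∀ n, x (n + 1) ≠ 0 := by
    intro n h
    apply h0notin
    refine ⟨x n, ?_, hadom1 _ _ (edge n)⟩
    show Atom.roleAtom 1 (x n) 0 ∈ I
    have := edge n
    rw [h] at this
    exact this
  have hinj : Function.Injective x := by
    intro m
    induction m with
    | zero =>
      intro n h
      cases n with
      | zero => rfl
      | succ n => exact absurd h.symm (hno0 n)
    | succ m ih =>
      intro n h
      cases n with
      | zero => exact absurd h (hno0 m)
      | succ n =>
        have e1 : (x (m + 1), x m) ∈ Role.interp I rp.invr := edge m
        have e2 : (x (m + 1), x n) ∈ Role.interp I rp.invr := by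
          show Atom.roleAtom 1 (x n) (x (m+1)) ∈ I
          rw [h]; exact edge n
        have := hf _ _ _ e1 e2
        rw [ih this]
  apply Set.infinite_of_injective_forall_mem
    (f := fun n : ℕ => (x n, x (n + 1))) (s := rp.interp I)
    ?_ (fun n => edge n) hfin
  intro m n h
  exact hinj (congrArg Prod.fst h)

lemma pos_instance_aux : ∃ J : Instance, isModel J exOntology ∧
    (cA.interp J).Finite ∧ (cB.interp J).Finite ∧ (rr.interp J).Finite := by
  refine ⟨exJ, ?_, ?_, ?_, ?_⟩
  · intro a ha
    simp only [exOntology, Finset.mem_insert, Finset.mem_singleton] at ha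
    rcases ha with rfl | rfl | rfl | rfl | rfl | rfl
    · -- A ⊑ ∃r.B
      intro c hc
      simp only [cA, Concept.interp, Set.mem_setOf_eq, memJ_concept] at hc
      rcases hc with ⟨-, rfl⟩ | ⟨h, -⟩
      · exact ⟨1, by show Atom.roleAtom 0 0 1 ∈ exJ; rw [memJ_role]; tauto,
          by show Atom.conceptAtom 1 1 ∈ exJ; rw [memJ_concept]; tauto⟩
      · omega
    · -- B ⊑ ∃r.A
      intro c hc
      simp only [cB, Concept.interp, Set.mem_setOf_eq, memJ_concept] at hc
      rcases hc with ⟨h, -⟩ | ⟨-, rfl⟩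
      · omega
      · exact ⟨0, by show Atom.roleAtom 0 1 0 ∈ exJ; rw [memJ_role]; tauto,
          by show Atom.conceptAtom 0 0 ∈ exJ; rw [memJ_concept]; tauto⟩
    · -- ∃p⁻.⊤ ⊑ ∃p.⊤
      intro c _
      exact ⟨c + 1, by show Atom.roleAtom 1 c (c+1) ∈ exJ; rw [memJ_role]; tauto, adomJ _⟩
    · -- A ⊑ ∃p.⊤ ⊓ ¬∃p⁻.⊤
      intro c hc
      simp only [cA, Concept.interp, Set.mem_setOf_eq, memJ_concept] at hc
      rcases hc with ⟨-, rfl⟩ | ⟨h, -⟩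
      · refine ⟨⟨1, by show Atom.roleAtom 1 0 1 ∈ exJ; rw [memJ_role]; tauto, adomJ _⟩,
          adomJ _, ?_⟩
        rintro ⟨d, hd, -⟩
        have : Atom.roleAtom 1 d 0 ∈ exJ := hd
        rw [memJ_role] at this
        omega
      · omega
    · -- {0} ⊑ A
      intro c hc
      simp only [Concept.interp, Set.mem_singleton_iff] at hc
      subst hc
      show Atom.conceptAtom 0 0 ∈ exJ
      rw [memJ_concept]; tauto
    · -- func(p⁻)
      intro c d₁ d₂ h1 h2
      have e1 : Atom.roleAtom 1 d₁ c ∈ exJ := h1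
      have e2 : Atom.roleAtom 1 d₂ c ∈ exJ := h2
      rw [memJ_role] at e1 e2
      rcases e1 with ⟨h,-,-⟩|⟨h,-,-⟩|⟨-,h⟩
      · exact absurd h one_ne_zero
      · exact absurd h one_ne_zero
      · rcases e2 with ⟨h',-,-⟩|⟨h',-,-⟩|⟨-,h'⟩
        · exact absurd h' one_ne_zero
        · exact absurd h' one_ne_zero
        · exact Nat.add_right_cancel (h.symm.trans h')
  · have : cA.interp exJ = {0} := by
      ext c
      simp [cA, Concept.interp, memJ_concept]
    rw [this]; exact Set.finite_singleton _
  · have : cB.interp exJ = {1} := by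
      ext c
      simp [cB, Concept.interp, memJ_concept]
    rw [this]; exact Set.finite_singleton _
  · have : rr.interp exJ = {(0, 1), (1, 0)} := by
      ext ⟨c, d⟩
      simp [rr, Role.interp, memJ_role, Prod.ext_iff]
    rw [this]
    exact (Set.finite_singleton _).insert _

/-- `(O, {A, B, r})` is a positive instance of MIXED-SAT; for every
`Σ` containing `p`, `(O, Σ)` is a negative instance of MIXED-SAT; in particular,
`p` has an infinite extension in every model of `O`. -/
theorem example_mixedSat :
    (∃ J : Instance, isModel J exOntology ∧
      (cA.interp J).Finite ∧ (cB.interp J).Finite ∧ (rr.interp J).Finite) ∧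
    (∀ Sc Sr : Set ℕ, 1 ∈ Sr → ¬ mixedSat exOntology Sc Sr) ∧
    (∀ I : Instance, isModel I exOntology → ¬ (rp.interp I).Finite) := by
  refine ⟨pos_instance_aux, ?_, p_infinite_aux⟩
  rintro Sc Sr h1 ⟨J, hm, -, hr⟩
  exact p_infinite_aux J hm (hr 1 h1)

end DLPaper
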